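/- arXiv:1709.07668 — 2 statements merged into one kernel-verified Lean document; each statement's English description precedes it below -/
import Mathlib

section
/- Let m, n ≥ 2 be integers, let G be a finite simple graph on the vertex set [n], and let j ∈ [n]. Then for the lexicographic order <, the initial ideal of the sum 𝔍_G + (x_{1j}, …, x_{mj}) equals the sum of initial ideals: ini_<(𝔍_G + (x_{1j}, …, x_{mj})) = ini_<(𝔍_G) + (x_{1j}, …, x_{mj}). -/
open scoped TensorProduct

namespace GBEI

/-! ### Graph-theoretic notions -/

/-- Number of connected components of a graph. -/
noncomputable def ncomp {V : Type} (G : SimpleGraph V) : ℕ :=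
  Nat.card G.ConnectedComponent

/-- Number of connected components of the induced subgraph on the complement of `T`. -/
noncomputable def ncompDel {V : Type} (G : SimpleGraph V) (T : Finset V) : ℕ :=
  Nat.card (G.induce ((↑T : Set V)ᶜ)).ConnectedComponent

/-- `T` is a cut set: deleting `T` increases the number of connected components. -/
def IsCutSet {V : Type} (G : SimpleGraph V) (T : Finset V) : Prop :=
  ncomp G < ncompDel G T

/-- `T` is a cut set which is minimal with respect to inclusion. -/
def IsMinimalCutSet {V : Type} (G : SimpleGraph V) (T : Finset V) : Prop :=
  IsCutSet G T ∧ ∀ T' ⊆ T, IsCutSet G T' → T' = T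

/-- `aCount G i` is the number of minimal cut sets of `G` of cardinality `i`. -/
noncomputable def aCount {V : Type} (G : SimpleGraph V) (i : ℕ) : ℕ :=
  Set.ncard {T : Finset V | IsMinimalCutSet G T ∧ T.card = i}

/-- `T` has the cut point property: for every `i ∈ T`,
`c(T \ {i}) < c(T)` where `c(T)` is the number of connected components of `G` restricted
to the complement of `T`. -/
def HasCutPointProperty {V : Type} [DecidableEq V] (G : SimpleGraph V) (T : Finset V) : Prop :=
  ∀ i ∈ T, ncompDel G (T.erase i) < ncompDel G T

/-- A graph is chordal if it has no induced cycle of length at least 4. -/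
def Chordal {V : Type} (G : SimpleGraph V) : Prop :=
  ∀ k : ℕ, 4 ≤ k → IsEmpty (SimpleGraph.cycleGraph k ↪g G)

/-- A maximal clique of `G`, as a finite set of vertices. -/
def IsMaxClique {V : Type} (G : SimpleGraph V) (s : Finset V) : Prop :=
  G.IsClique (↑s : Set V) ∧ ∀ t : Finset V, G.IsClique (↑t : Set V) → s ⊆ t → s = t

/-- A generalized block graph: a chordal graph in which, for any three (distinct) maximal
cliques with nonempty common intersection, the pairwise intersections all coincide. -/
def IsGeneralizedBlockGraph {V : Type} [DecidableEq V] (G : SimpleGraph V) : Prop :=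
  Chordal G ∧
    ∀ F₁ F₂ F₃ : Finset V, IsMaxClique G F₁ → IsMaxClique G F₂ → IsMaxClique G F₃ →
      F₁ ≠ F₂ → F₁ ≠ F₃ → F₂ ≠ F₃ → (F₁ ∩ F₂ ∩ F₃).Nonempty →
      F₁ ∩ F₂ = F₂ ∩ F₃ ∧ F₁ ∩ F₃ = F₂ ∩ F₃

/-- A block graph: a chordal graph in which any two distinct maximal cliques meet in at
most one vertex. -/
def IsBlockGraph {V : Type} [DecidableEq V] (G : SimpleGraph V) : Prop :=
  Chordal G ∧
    ∀ F₁ F₂ : Finset V, IsMaxClique G F₁ → IsMaxClique G F₂ → F₁ ≠ F₂ → (F₁ ∩ F₂).card ≤ 1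

/-- The complete graph on a finite set `B` of vertices (with all other vertices isolated). -/
def cliqueOn {V : Type} (B : Finset V) : SimpleGraph V where
  Adj u v := u ≠ v ∧ u ∈ B ∧ v ∈ B
  symm := ⟨fun u v ⟨h1, h2, h3⟩ => ⟨h1.symm, h3, h2⟩⟩
  loopless := ⟨fun u h => h.1 rfl⟩

/-- The graph obtained from `G` by deleting all vertices in `A` (keeping the ambient
vertex type; deleted vertices become isolated). Its edges are exactly the edges of the
induced subgraph of `G` on the complement of `A`. -/
def delVerts {V : Type} (G : SimpleGraph V) (A : Finset V) : SimpleGraph V where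
  Adj u v := G.Adj u v ∧ u ∉ A ∧ v ∉ A
  symm := ⟨fun u v ⟨h1, h2, h3⟩ => ⟨h1.symm, h3, h2⟩⟩
  loopless := ⟨fun u h => G.irrefl h.1⟩

/-! ### The polynomial ring and generalized binomial edge ideals -/

/-- The polynomial ring `K[x_{kj} : 1 ≤ k ≤ m, 1 ≤ j ≤ n]`; the variable type carries the
lexicographic order in which `x_{11}` is the smallest index (hence the largest variable for
the induced lexicographic monomial order). -/
abbrev PolyS (K : Type) [Field K] (m n : ℕ) : Type := MvPolynomial (Fin m ×ₗ Fin n) K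

/-- The variable `x_{kj}`. -/
noncomputable def xv (K : Type) [Field K] {m n : ℕ} (k : Fin m) (j : Fin n) : PolyS K m n :=
  MvPolynomial.X (toLex (k, j))

/-- The 2-minor `[k,l|i,j] = x_{ki} x_{lj} - x_{li} x_{kj}`. -/
noncomputable def pminor (K : Type) [Field K] {m n : ℕ} (k l : Fin m) (i j : Fin n) :
    PolyS K m n :=
  xv K k i * xv K l j - xv K l i * xv K k j

/-- The generalized binomial edge ideal `𝔍_G` of a graph `G` on `[n]`. -/
noncomputable def gbei (K : Type) [Field K] (m : ℕ) {n : ℕ} (G : SimpleGraph (Fin n)) :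
    Ideal (PolyS K m n) :=
  Ideal.span {f | ∃ (k l : Fin m) (i j : Fin n),
    k < l ∧ i < j ∧ G.Adj i j ∧ f = pminor K k l i j}

/-- The ideal generated by the variables `x_{kj}`, `1 ≤ k ≤ m`, `j ∈ A`. -/
noncomputable def varsIdeal (K : Type) [Field K] (m : ℕ) {n : ℕ} (A : Finset (Fin n)) :
    Ideal (PolyS K m n) :=
  Ideal.span {f | ∃ (k : Fin m) (j : Fin n), j ∈ A ∧ f = xv K k j}

/-! ### Lexicographic initial ideals -/

/-- `d` is the exponent vector of the lexicographic leading monomial of `p`, for the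
lexicographic order with `x_{11} > ⋯ > x_{1n} > x_{21} > ⋯ > x_{mn}`. -/
def IsLeadExp (K : Type) [Field K] {m n : ℕ} (p : PolyS K m n)
    (d : (Fin m ×ₗ Fin n) →₀ ℕ) : Prop :=
  d ∈ p.support ∧ ∀ e ∈ p.support, e ≠ d → toLex e < toLex d

/-- The initial ideal of `I` with respect to the lexicographic order: the ideal generated
by the leading monomials of the nonzero elements of `I`. -/
noncomputable def iniIdeal (K : Type) [Field K] {m n : ℕ} (I : Ideal (PolyS K m n)) :
    Ideal (PolyS K m n) :=
  Ideal.span {f | ∃ p ∈ I, ∃ d, IsLeadExp K p d ∧ f = MvPolynomial.monomial d (1 : K)}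

/-! ### Projective dimension, depth and Castelnuovo–Mumford regularity -/

/-- `M` admits a resolution `0 → F_k → ⋯ → F_1 → F_0 → M → 0` by finitely generated
free `R`-modules. -/
def HasFreeResLen (R : Type) [CommRing R] (M : Type) [AddCommGroup M] [Module R M]
    (k : ℕ) : Prop :=
  ∃ (ι : ℕ → Type) (_ : ∀ i, Finite (ι i))
    (d : ∀ i : ℕ, (ι (i + 1) →₀ R) →ₗ[R] (ι i →₀ R)) (ε : (ι 0 →₀ R) →ₗ[R] M),
      (∀ i, k < i → IsEmpty (ι i)) ∧
      Function.Surjective ε ∧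
      Function.Exact (d 0) ε ∧
      ∀ i, Function.Exact (d (i + 1)) (d i)

/-- The projective dimension of `M`: the smallest possible length of a finite free
resolution of `M`. -/
noncomputable def projDim (R : Type) [CommRing R] (M : Type) [AddCommGroup M]
    [Module R M] : ℕ :=
  sInf {k | HasFreeResLen R M k}

/-- The depth of `S/I` (with respect to the irrelevant maximal ideal), via the
Auslander–Buchsbaum formula: `depth S/I = (number of variables) - projdim S/I`. -/
noncomputable def depthQuot {σ : Type} (K : Type) [Field K] (I : Ideal (MvPolynomial σ K)) :
    ℕ :=
  Nat.card σ - projDim (MvPolynomial σ K) (MvPolynomial σ K ⧸ I)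

/-- `S/I` admits a graded free resolution (by finitely generated graded free modules,
with generator degrees `degs`) in which all shifts `j` occurring in homological degree `i`
satisfy `j ≤ r + i`.  The minimum of all such `r` is the Castelnuovo–Mumford regularity
`max { j - i : β_{ij}(S/I) ≠ 0 }`. -/
def HasGradedFreeResRegLE {σ : Type} (K : Type) [Field K] (I : Ideal (MvPolynomial σ K))
    (r : ℕ) : Prop :=
  ∃ (len : ℕ) (ι : ℕ → Type) (_ : ∀ i, Finite (ι i)) (degs : ∀ i, ι i → ℕ)
    (d : ∀ i : ℕ, (ι (i + 1) →₀ MvPolynomial σ K) →ₗ[MvPolynomial σ K] (ι i →₀ MvPolynomial σ K))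
    (ε : (ι 0 →₀ MvPolynomial σ K) →ₗ[MvPolynomial σ K] (MvPolynomial σ K ⧸ I)),
      (∀ i, len < i → IsEmpty (ι i)) ∧
      Function.Surjective ε ∧
      Function.Exact (d 0) ε ∧
      (∀ i, Function.Exact (d (i + 1)) (d i)) ∧
      (∀ a : ι 0, ∃ p : MvPolynomial σ K,
        p.IsHomogeneous (degs 0 a) ∧ ε (Finsupp.single a 1) = Ideal.Quotient.mk I p) ∧
      (∀ (i : ℕ) (a : ι (i + 1)) (b : ι i),
        (d i (Finsupp.single a 1)) b = 0 ∨
        ∃ e, e + degs i b = degs (i + 1) a ∧ ((d i (Finsupp.single a 1)) b).IsHomogeneous e) ∧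
      (∀ (i : ℕ) (a : ι i), degs i a ≤ r + i)

/-- The Castelnuovo–Mumford regularity of `S/I`. -/
noncomputable def regQuot {σ : Type} (K : Type) [Field K] (I : Ideal (MvPolynomial σ K)) :
    ℕ :=
  sInf {r | HasGradedFreeResRegLE K I r}

/-- The height of a prime ideal `P` (junk value `0` if `P` is not prime). -/
noncomputable def primeHeight {R : Type} [CommRing R] (P : Ideal R) : ℕ∞ :=
  ⨆ h : P.IsPrime, Order.height (⟨P, h⟩ : PrimeSpectrum R)

/-- An ideal is unmixed if all of its minimal primes have the same height. -/
def IsUnmixed {R : Type} [CommRing R] (I : Ideal R) : Prop :=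
  ∀ P ∈ I.minimalPrimes, ∀ Q ∈ I.minimalPrimes, primeHeight P = primeHeight Q

end GBEI

namespace GBEI

/-- The generalized binomial edge ideal of (the restriction of) `G` inside the polynomial
ring `K[x_{kj} : 1 ≤ k ≤ m, j ∈ V]` on a subset `V` of the vertices. -/
noncomputable def gbeiOn (K : Type) [Field K] (m : ℕ) {n : ℕ} (G : SimpleGraph (Fin n))
    (V : Set (Fin n)) : Ideal (MvPolynomial (Fin m × V) K) :=
  Ideal.span {f | ∃ (k l : Fin m) (i j : V),
    k < l ∧ (i : Fin n) < (j : Fin n) ∧ G.Adj (i : Fin n) (j : Fin n) ∧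
    f = MvPolynomial.X (k, i) * MvPolynomial.X (l, j) -
        MvPolynomial.X (l, i) * MvPolynomial.X (k, j)}

/-- The degree-`dd` homogeneous component of `S/I`, the image of the space of homogeneous
polynomials of degree `dd`. -/
noncomputable def quotDeg {σ : Type} (K : Type) [Field K] (I : Ideal (MvPolynomial σ K))
    (dd : ℕ) : Submodule K (MvPolynomial σ K ⧸ I) :=
  Submodule.map (Ideal.Quotient.mkₐ K I).toLinearMap (MvPolynomial.homogeneousSubmodule σ K dd)

/-- The minimal prime `P_T(G)` of `𝔍_G` associated with a set `T` having the cut point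
property: it is generated by the variables `x_{kj}`, `j ∈ T`, together with the 2-minors
`[k,l|i,j]` for all pairs `i < j` of vertices lying in a common connected component of the
restriction of `G` to the complement of `T`. -/
noncomputable def cutPrime (K : Type) [Field K] (m : ℕ) {n : ℕ} (G : SimpleGraph (Fin n))
    (T : Finset (Fin n)) : Ideal (PolyS K m n) :=
  Ideal.span ({f | ∃ (k : Fin m) (j : Fin n), j ∈ T ∧ f = xv K k j} ∪
    {f | ∃ (k l : Fin m) (i j : Fin n) (hi : i ∈ ((↑T : Set (Fin n))ᶜ))
      (hj : j ∈ ((↑T : Set (Fin n))ᶜ)),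
      k < l ∧ i < j ∧ (G.induce ((↑T : Set (Fin n))ᶜ)).Reachable ⟨i, hi⟩ ⟨j, hj⟩ ∧
      f = pminor K k l i j})

end GBEI

/-!
Setting `x_{1j}, …, x_{mj}` to zero is an endomorphism of `S` that maps every 2-minor of `𝔍_G`
to itself or to `0` and kills `(x_{1j}, …, x_{mj})`, so it maps `𝔍_G + (x_{1j}, …, x_{mj})` into
`𝔍_G`. It only deletes terms, so when the leading monomial of `p` involves no `x_{kj}` it stays the
leading monomial of the image of `p`, and lies in `ini_<(𝔍_G)`; otherwise it is divisible by some
`x_{kj}`.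
-/

namespace MvPolynomial

variable {σ R : Type*} [CommSemiring R]

noncomputable def killVars (s : Set σ) : MvPolynomial σ R →ₐ[R] MvPolynomial σ R :=
  aeval (sᶜ.indicator X)

theorem killVars_X (s : Set σ) (v : σ) :
    killVars s (X v : MvPolynomial σ R) = sᶜ.indicator X v :=
  aeval_X _ _

theorem killVars_monomial_of_forall_eq_zero {s : Set σ} {u : σ →₀ ℕ} (hu : ∀ v ∈ s, u v = 0)
    (a : R) : killVars s (monomial u a) = monomial u a := by
  rw [killVars, aeval_monomial, monomial_eq, algebraMap_eq]
  congr 1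
  refine Finsupp.prod_congr fun v hv => ?_
  have hvs : v ∉ s := fun h => Finsupp.mem_support_iff.mp hv (hu v h)
  rw [Set.indicator_of_mem (Set.mem_compl hvs)]

theorem killVars_monomial_of_ne_zero {s : Set σ} {u : σ →₀ ℕ} {v : σ} (hv : v ∈ s)
    (huv : u v ≠ 0) (a : R) : killVars s (monomial u a) = 0 := by
  rw [killVars, aeval_monomial, Finsupp.prod,
    Finset.prod_eq_zero (Finsupp.mem_support_iff.mpr huv), mul_zero]
  rw [Set.indicator_of_notMem (Set.notMem_compl_iff.mpr hv), zero_pow huv]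

open Classical in
theorem coeff_killVars (s : Set σ) (p : MvPolynomial σ R) (e : σ →₀ ℕ) :
    (killVars s p).coeff e = if ∀ v ∈ s, e v = 0 then p.coeff e else 0 := by
  induction p using induction_on' with
  | add p q hp hq =>
    rw [map_add, coeff_add, coeff_add, hp, hq]
    split_ifs <;> simp
  | monomial u a =>
    by_cases hu : ∀ v ∈ s, u v = 0
    · rw [killVars_monomial_of_forall_eq_zero hu]
      by_cases hue : u = e
      · rw [if_pos (hue ▸ hu)]
      · rw [coeff_monomial, if_neg hue, ite_self]
    · push Not at hu
      obtain ⟨v, hv, huv⟩ := hu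
      rw [killVars_monomial_of_ne_zero hv huv, coeff_zero]
      split_ifs with he
      · rw [coeff_monomial, if_neg]
        rintro rfl
        exact huv (he v hv)
      · rfl

theorem support_killVars_subset (s : Set σ) (p : MvPolynomial σ R) :
    (killVars s p).support ⊆ p.support := by
  intro e he
  rw [mem_support_iff, coeff_killVars] at he
  rw [mem_support_iff]
  split_ifs at he
  · exact he
  · exact absurd rfl he

theorem coeff_killVars_of_forall_eq_zero {s : Set σ} (p : MvPolynomial σ R) {e : σ →₀ ℕ}
    (he : ∀ v ∈ s, e v = 0) : (killVars s p).coeff e = p.coeff e := by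
  rw [coeff_killVars, if_pos he]

theorem span_X_image_le_ker_killVars (s : Set σ) :
    Ideal.span (X '' s) ≤ RingHom.ker (killVars s : MvPolynomial σ R →ₐ[R] _) := by
  rw [Ideal.span_le]
  rintro _ ⟨v, hv, rfl⟩
  change killVars s (X v) = 0
  rw [killVars_X, Set.indicator_of_notMem (Set.notMem_compl_iff.mpr hv)]

end MvPolynomial

namespace GBEI

open MvPolynomial

section LeadExp

variable {K : Type} [Field K] {m n : ℕ}

theorem monomial_mem_iniIdeal {I : Ideal (PolyS K m n)} {p : PolyS K m n} (hp : p ∈ I)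
    {d : (Fin m ×ₗ Fin n) →₀ ℕ} (hd : IsLeadExp K p d) : monomial d (1 : K) ∈ iniIdeal K I :=
  Ideal.subset_span ⟨p, hp, d, hd, rfl⟩

theorem iniIdeal_mono {I J : Ideal (PolyS K m n)} (h : I ≤ J) : iniIdeal K I ≤ iniIdeal K J :=
  Ideal.span_le.mpr fun _ ⟨_, hp, _, hd, he⟩ => he ▸ monomial_mem_iniIdeal (h hp) hd

theorem isLeadExp_X (v : Fin m ×ₗ Fin n) : IsLeadExp K (X v) (Finsupp.single v 1) := by
  refine ⟨by simp [support_X], fun e he hne => absurd ?_ hne⟩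
  simpa [support_X] using he

theorem X_mem_iniIdeal {I : Ideal (PolyS K m n)} {v : Fin m ×ₗ Fin n} (hv : X v ∈ I) :
    X v ∈ iniIdeal K I :=
  monomial_mem_iniIdeal hv (isLeadExp_X v)

theorem IsLeadExp.killVars {p : PolyS K m n} {d : (Fin m ×ₗ Fin n) →₀ ℕ} (hd : IsLeadExp K p d)
    {s : Set (Fin m ×ₗ Fin n)} (hds : ∀ v ∈ s, d v = 0) : IsLeadExp K (killVars s p) d := by
  refine ⟨?_, fun e he hne => hd.2 e (support_killVars_subset s p he) hne⟩
  rw [mem_support_iff, coeff_killVars_of_forall_eq_zero p hds]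
  exact mem_support_iff.mp hd.1

end LeadExp

section Column

variable (K : Type) [Field K] {m n : ℕ}

def column (j : Fin n) : Set (Fin m ×ₗ Fin n) := {v | (ofLex v).2 = j}

theorem span_xv_eq_span_X_column (j : Fin n) :
    Ideal.span {f : PolyS K m n | ∃ k : Fin m, f = xv K k j} = Ideal.span (X '' column j) := by
  congr 1
  ext f
  constructor
  · rintro ⟨k, rfl⟩
    exact ⟨toLex (k, j), rfl, rfl⟩
  · rintro ⟨v, hv, rfl⟩
    exact ⟨(ofLex v).1, by rw [← hv]; rfl⟩

theorem killVars_column_xv (j : Fin n) (k : Fin m) (i : Fin n) :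
    killVars (column j) (xv K k i) = if i = j then 0 else xv K k i := by
  by_cases h : i = j <;> simp [xv, killVars_X, column, h]

theorem killVars_column_pminor (j : Fin n) (k l : Fin m) (i i' : Fin n) :
    killVars (column j) (pminor K k l i i') =
      if i = j ∨ i' = j then 0 else pminor K k l i i' := by
  simp only [pminor, map_sub, map_mul, killVars_column_xv]
  split_ifs <;> simp_all

theorem killVars_column_mem_gbei (G : SimpleGraph (Fin n)) (j : Fin n) {q : PolyS K m n}
    (hq : q ∈ gbei K m G) : killVars (column j) q ∈ gbei K m G := by
  refine (Ideal.span_le (I := (gbei K m G).comap (killVars (column j)))).mpr ?_ hq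
  rintro _ ⟨k, l, i, i', hkl, hii', hadj, rfl⟩
  rw [SetLike.mem_coe, Ideal.mem_comap, killVars_column_pminor]
  split_ifs
  · exact zero_mem _
  · exact Ideal.subset_span ⟨k, l, i, i', hkl, hii', hadj, rfl⟩

theorem killVars_column_mem_gbei_of_mem_sup (G : SimpleGraph (Fin n)) (j : Fin n)
    {p : PolyS K m n} (hp : p ∈ gbei K m G + Ideal.span (X '' column j)) :
    killVars (column j) p ∈ gbei K m G := by
  obtain ⟨q, hq, r, hr, rfl⟩ := Submodule.mem_sup.mp hp
  rw [map_add, RingHom.mem_ker.mp (span_X_image_le_ker_killVars _ hr), add_zero]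
  exact killVars_column_mem_gbei K G j hq

end Column

theorem iniIdeal_gbei_add_vars_single_general (K : Type) [Field K] (m n : ℕ)
    (G : SimpleGraph (Fin n)) (j : Fin n) :
    iniIdeal K (gbei K m G + Ideal.span {f : PolyS K m n | ∃ k : Fin m, f = xv K k j}) =
      iniIdeal K (gbei K m G) + Ideal.span {f : PolyS K m n | ∃ k : Fin m, f = xv K k j} := by
  rw [span_xv_eq_span_X_column]
  apply le_antisymm
  · refine Ideal.span_le.mpr ?_
    rintro _ ⟨p, hp, d, hd, rfl⟩
    by_cases hdj : ∀ v ∈ column j, d v = 0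
    · exact Ideal.mem_sup_left <| monomial_mem_iniIdeal
        (killVars_column_mem_gbei_of_mem_sup K G j hp) (hd.killVars hdj)
    · push Not at hdj
      refine Ideal.mem_sup_right (mem_ideal_span_X_image.mpr fun e he => ?_)
      exact Finset.mem_singleton.mp (support_monomial_subset he) ▸ hdj
  · refine sup_le (iniIdeal_mono le_sup_left) (Ideal.span_le.mpr ?_)
    rintro _ ⟨v, hv, rfl⟩
    exact X_mem_iniIdeal (Ideal.mem_sup_right (Ideal.subset_span ⟨v, hv, rfl⟩))

/-- `ini_<(𝔍_G + (x_{1j},…,x_{mj})) = ini_<(𝔍_G) + (x_{1j},…,x_{mj})`. -/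
theorem iniIdeal_gbei_add_vars_single (K : Type) [Field K] (m n : ℕ) (hm : 2 ≤ m) (hn : 2 ≤ n)
    (G : SimpleGraph (Fin n)) (j : Fin n) :
    iniIdeal K (gbei K m G + Ideal.span {f : PolyS K m n | ∃ k : Fin m, f = xv K k j}) =
      iniIdeal K (gbei K m G) + Ideal.span {f : PolyS K m n | ∃ k : Fin m, f = xv K k j} :=
  iniIdeal_gbei_add_vars_single_general K m n G j

end GBEI
end

section
/- In the leaf-order setup for a connected generalized block graph G (with leaf F_r, branches F_{t_1},…,F_{t_q}, common intersection A, merged graph G', and G'' the induced subgraph of G on [n]∖A), the generalized binomial edge ideal decomposes as 𝔍_G = 𝔍_{G'} ∩ ((x_{kj} : 1 ≤ k ≤ m, j ∈ A) + 𝔍_{G''}). -/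
open scoped TensorProduct

namespace GBEI

/-! Every vertex of the merged clique `B` is adjacent to all of `A`, so
`𝔍_{G ⊔ K_B} ⊆ 𝔍_G + N`, where `N` is generated by the 2-minors on pairs of columns outside `A`
that are adjacent to all of `A`, and a Plücker relation gives `(x_A) · N ⊆ 𝔍_G`. Write `f` in the
intersection as `g + h` with `g ∈ 𝔍_G`, `h ∈ N`, and let `π` kill the variables of the columns in
`A`. Then `h - π h ∈ (x_A) · N ⊆ 𝔍_G`, and `π h ∈ 𝔍_{G ∖ A}` because
`h = f - g ∈ (x_A) + 𝔍_{G ∖ A}`. -/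

theorem sub_apply_mem_mul_span {R F : Type*} [CommRing R] [FunLike F R R] [RingHomClass F R R]
    (φ : F) {J : Ideal R} (hJ : ∀ r, r - φ r ∈ J) {s : Set R} (hs : ∀ x ∈ s, φ x = x)
    {h : R} (hh : h ∈ Ideal.span s) : h - φ h ∈ J * Ideal.span s := by
  induction hh using Submodule.span_induction with
  | mem x hx => rw [hs x hx, sub_self]; exact zero_mem _
  | zero => rw [map_zero, sub_zero]; exact zero_mem _
  | add x y _ _ hx hy => rw [map_add, add_sub_add_comm]; exact add_mem hx hy
  | smul r x hx' hx =>
    rw [smul_eq_mul, map_mul,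
      show r * x - φ r * φ x = (r - φ r) * x + φ r * (x - φ x) by ring]
    exact add_mem (Ideal.mul_mem_mul (hJ r) hx') (Ideal.mul_mem_left _ _ hx)

section

variable {K : Type} [Field K] {m n : ℕ}

theorem pminor_swap_rows (k l : Fin m) (i j : Fin n) :
    pminor K k l i j = -pminor K l k i j := by
  unfold pminor; ring

theorem pminor_swap_cols (k l : Fin m) (i j : Fin n) :
    pminor K k l i j = -pminor K k l j i := by
  unfold pminor; ring

theorem pminor_self (k : Fin m) (i j : Fin n) : pminor K k k i j = 0 := by
  unfold pminor; ring

theorem xv_mul_pminor (p k l : Fin m) (a u w : Fin n) :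
    xv K p a * pminor K k l u w =
      -(xv K p w * pminor K k l a u) - xv K k u * pminor K l p a w
        + xv K l u * pminor K k p a w := by
  unfold pminor xv; ring

theorem pminor_mem_gbei {G : SimpleGraph (Fin n)} (k l : Fin m) {i j : Fin n}
    (hij : G.Adj i j) : pminor K k l i j ∈ gbei K m G := by
  rcases lt_trichotomy k l with hkl | rfl | hkl
  · rcases hij.ne.lt_or_gt with h | h
    · exact Ideal.subset_span ⟨k, l, i, j, hkl, h, hij, rfl⟩
    · rw [pminor_swap_cols]
      exact neg_mem (Ideal.subset_span ⟨k, l, j, i, hkl, h, hij.symm, rfl⟩)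
  · rw [pminor_self]; exact zero_mem _
  · rcases hij.ne.lt_or_gt with h | h
    · rw [pminor_swap_rows]
      exact neg_mem (Ideal.subset_span ⟨l, k, i, j, hkl, h, hij, rfl⟩)
    · rw [pminor_swap_rows, pminor_swap_cols, neg_neg]
      exact Ideal.subset_span ⟨l, k, j, i, hkl, h, hij.symm, rfl⟩

theorem gbei_mono {G H : SimpleGraph (Fin n)} (h : G ≤ H) : gbei K m G ≤ gbei K m H :=
  Ideal.span_mono fun _ ⟨k, l, i, j, hkl, hij, hadj, hf⟩ => ⟨k, l, i, j, hkl, hij, h hadj, hf⟩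

theorem gbei_le_varsIdeal_add_gbei_delVerts (G : SimpleGraph (Fin n)) (A : Finset (Fin n)) :
    gbei K m G ≤ varsIdeal K m A + gbei K m (delVerts G A) := by
  refine Ideal.span_le.mpr ?_
  rintro _ ⟨k, l, i, j, hkl, hij, hadj, rfl⟩
  have hvar : ∀ {k j}, j ∈ A → xv K k j ∈ varsIdeal K m A + gbei K m (delVerts G A) :=
    fun hj => Ideal.mem_sup_left (Ideal.subset_span ⟨_, _, hj, rfl⟩)
  by_cases hi : i ∈ A
  · exact sub_mem (Ideal.mul_mem_right _ _ (hvar hi)) (Ideal.mul_mem_right _ _ (hvar hi))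
  by_cases hj : j ∈ A
  · exact sub_mem (Ideal.mul_mem_left _ _ (hvar hj)) (Ideal.mul_mem_left _ _ (hvar hj))
  exact Ideal.mem_sup_right (Ideal.subset_span ⟨k, l, i, j, hkl, hij, ⟨hadj, hi, hj⟩, rfl⟩)

theorem delVerts_le (G : SimpleGraph (Fin n)) (A : Finset (Fin n)) : delVerts G A ≤ G :=
  fun _ _ hadj => hadj.1

def commonNbrMinors (K : Type) [Field K] (m : ℕ) {n : ℕ} (G : SimpleGraph (Fin n))
    (A : Finset (Fin n)) : Set (PolyS K m n) :=
  {f | ∃ (k l : Fin m) (u w : Fin n), u ∉ A ∧ w ∉ A ∧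
    (∀ a ∈ A, G.Adj a u) ∧ (∀ a ∈ A, G.Adj a w) ∧ f = pminor K k l u w}

theorem varsIdeal_mul_span_commonNbrMinors_le (G : SimpleGraph (Fin n)) (A : Finset (Fin n)) :
    varsIdeal K m A * Ideal.span (commonNbrMinors K m G A) ≤ gbei K m G := by
  rw [varsIdeal, Ideal.span_mul_span', Ideal.span_le]
  rintro _ ⟨_, ⟨p, a, ha, rfl⟩, _, ⟨k, l, u, w, -, -, hu, hw, rfl⟩, rfl⟩
  show xv K p a * pminor K k l u w ∈ gbei K m G
  rw [xv_mul_pminor]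
  exact add_mem (sub_mem (neg_mem (Ideal.mul_mem_left _ _ (pminor_mem_gbei k l (hu a ha))))
    (Ideal.mul_mem_left _ _ (pminor_mem_gbei l p (hw a ha))))
    (Ideal.mul_mem_left _ _ (pminor_mem_gbei k p (hw a ha)))

theorem gbei_sup_cliqueOn_le {G : SimpleGraph (Fin n)} {A B : Finset (Fin n)}
    (hAB : ∀ u ∈ B, ∀ a ∈ A, a ≠ u → G.Adj a u) :
    gbei K m (G ⊔ cliqueOn B) ≤ gbei K m G ⊔ Ideal.span (commonNbrMinors K m G A) := by
  refine Ideal.span_le.mpr ?_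
  rintro _ ⟨k, l, i, j, hkl, hij, hadj, rfl⟩
  by_cases hG : G.Adj i j
  · exact Ideal.mem_sup_left (pminor_mem_gbei k l hG)
  obtain ⟨hne, hiB, hjB⟩ : (cliqueOn B).Adj i j := hadj.resolve_left hG
  have hiA : i ∉ A := fun hi => hG (hAB j hjB i hi hne)
  have hjA : j ∉ A := fun hj => hG (hAB i hiB j hj hne.symm).symm
  refine Ideal.mem_sup_right (Ideal.subset_span ⟨k, l, i, j, hiA, hjA, ?_, ?_, rfl⟩)
  · exact fun a ha => hAB i hiB a ha (ne_of_mem_of_not_mem ha hiA)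
  · exact fun a ha => hAB j hjB a ha (ne_of_mem_of_not_mem ha hjA)

noncomputable def killCols (K : Type) [Field K] (m : ℕ) {n : ℕ} (A : Finset (Fin n)) :
    PolyS K m n →ₐ[K] PolyS K m n :=
  MvPolynomial.aeval fun v => if (ofLex v).2 ∈ A then 0 else MvPolynomial.X v

theorem killCols_xv_of_mem {A : Finset (Fin n)} (k : Fin m) {j : Fin n} (hj : j ∈ A) :
    killCols K m A (xv K k j) = 0 := by
  simp [killCols, xv, hj]

theorem killCols_xv_of_notMem {A : Finset (Fin n)} (k : Fin m) {j : Fin n} (hj : j ∉ A) :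
    killCols K m A (xv K k j) = xv K k j := by
  simp [killCols, xv, hj]

theorem killCols_pminor {A : Finset (Fin n)} (k l : Fin m) {i j : Fin n} (hi : i ∉ A)
    (hj : j ∉ A) : killCols K m A (pminor K k l i j) = pminor K k l i j := by
  simp only [pminor, map_sub, map_mul, killCols_xv_of_notMem _ hi, killCols_xv_of_notMem _ hj]

theorem sub_killCols_mem_varsIdeal (A : Finset (Fin n)) (p : PolyS K m n) :
    p - killCols K m A p ∈ varsIdeal K m A := by
  have hmk : (Ideal.Quotient.mkₐ K (varsIdeal K m A)).comp (killCols K m A) =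
      Ideal.Quotient.mkₐ K (varsIdeal K m A) := by
    refine MvPolynomial.algHom_ext fun v => ?_
    by_cases hv : (ofLex v).2 ∈ A
    · simp only [AlgHom.comp_apply, killCols, MvPolynomial.aeval_X, if_pos hv, map_zero]
      refine (Ideal.Quotient.eq_zero_iff_mem.mpr ?_).symm
      exact Ideal.subset_span ⟨(ofLex v).1, (ofLex v).2, hv, rfl⟩
    · simp only [AlgHom.comp_apply, killCols, MvPolynomial.aeval_X, if_neg hv]
  exact Ideal.Quotient.eq.mp (DFunLike.congr_fun hmk p).symm

theorem map_killCols_varsIdeal_add_gbei_delVerts_le (G : SimpleGraph (Fin n))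
    (A : Finset (Fin n)) :
    (varsIdeal K m A + gbei K m (delVerts G A)).map (killCols K m A) ≤
      gbei K m (delVerts G A) := by
  rw [Ideal.add_eq_sup, Ideal.map_sup, sup_le_iff, varsIdeal, Ideal.map_span,
    Ideal.map_le_iff_le_comap]
  constructor
  · refine Ideal.span_le.mpr ?_
    rintro _ ⟨_, ⟨k, j, hj, rfl⟩, rfl⟩
    rw [SetLike.mem_coe, killCols_xv_of_mem k hj]
    exact zero_mem _
  · refine Ideal.span_le.mpr ?_
    rintro _ ⟨k, l, i, j, hkl, hij, hadj, rfl⟩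
    rw [SetLike.mem_coe, Ideal.mem_comap, killCols_pminor k l hadj.2.1 hadj.2.2]
    exact Ideal.subset_span ⟨k, l, i, j, hkl, hij, hadj, rfl⟩

theorem gbei_eq_gbei_sup_cliqueOn_inf {G : SimpleGraph (Fin n)} {A B : Finset (Fin n)}
    (hAB : ∀ u ∈ B, ∀ a ∈ A, a ≠ u → G.Adj a u) :
    gbei K m G = gbei K m (G ⊔ cliqueOn B) ⊓ (varsIdeal K m A + gbei K m (delVerts G A)) := by
  set P := varsIdeal K m A + gbei K m (delVerts G A)
  refine le_antisymm (le_inf (gbei_mono le_sup_left) (gbei_le_varsIdeal_add_gbei_delVerts G A))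
    fun f hf => ?_
  obtain ⟨hf', hfP⟩ := Submodule.mem_inf.mp hf
  obtain ⟨g, hg, h, hh, rfl⟩ := Submodule.mem_sup.mp (gbei_sup_cliqueOn_le hAB hf')
  have hhP : h ∈ P := by
    simpa using sub_mem hfP (gbei_le_varsIdeal_add_gbei_delVerts G A hg)
  have hmoved : h - killCols K m A h ∈ gbei K m G :=
    varsIdeal_mul_span_commonNbrMinors_le G A <| sub_apply_mem_mul_span _
      (sub_killCols_mem_varsIdeal A)
      (by rintro _ ⟨k, l, u, w, hu, hw, -, -, rfl⟩; exact killCols_pminor k l hu hw) hh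
  have hkilled : killCols K m A h ∈ gbei K m G :=
    gbei_mono (delVerts_le G A)
      (map_killCols_varsIdeal_add_gbei_delVerts_le G A (Ideal.mem_map_of_mem _ hhP))
  simpa using add_mem hg (add_mem hmoved hkilled)

end

theorem gbei_eq_inf_decomposition_general (K : Type) [Field K] (m : ℕ)
    (n r q : ℕ) (hq : 1 ≤ q)
    (G : SimpleGraph (Fin n))
    (F : Fin r → Finset (Fin n))
    (hmc : ∀ i, IsMaxClique G (F i))
    (lst : Fin r)
    (t : Fin q → Fin r)
    (A : Finset (Fin n))
    (hA1 : ∀ i, F (t i) ∩ F lst = A)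
    (G' : SimpleGraph (Fin n))
    (hG' : G' = G ⊔ cliqueOn (F lst ∪ Finset.univ.biUnion fun i => F (t i))) :
    gbei K m G = gbei K m G' ⊓ (varsIdeal K m A + gbei K m (delVerts G A)) := by
  subst hG'
  refine gbei_eq_gbei_sup_cliqueOn_inf fun u hu a ha hau => ?_
  have hA : ∀ i, A ⊆ F (t i) ∧ A ⊆ F lst := fun i =>
    Finset.subset_inter_iff.mp (hA1 i).ge
  rcases Finset.mem_union.mp hu with hu | hu
  · exact (hmc lst).1 ((hA ⟨0, hq⟩).2 ha) hu hau
  · obtain ⟨i, -, hu⟩ := Finset.mem_biUnion.mp hu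
    exact (hmc (t i)).1 ((hA i).1 ha) hu hau

/-- in the leaf-order setup,
`𝔍_G = 𝔍_{G'} ∩ ((x_{kj} : j ∈ A) + 𝔍_{G''})`. -/
theorem gbei_eq_inf_decomposition (K : Type) [Field K] (m : ℕ) (hm : 2 ≤ m)
    (n r q α : ℕ) (hn : 2 ≤ n) (hr : 1 < r) (hq : 1 ≤ q) (hα : 1 ≤ α)
    (G : SimpleGraph (Fin n)) (hGconn : G.Connected) (hgb : IsGeneralizedBlockGraph G)
    (F : Fin r → Finset (Fin n))
    (hmc : ∀ i, IsMaxClique G (F i))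
    (hFinj : Function.Injective F)
    (hFall : ∀ s : Finset (Fin n), IsMaxClique G s → ∃ i, F i = s)
    (lst : Fin r) (hlst : ∀ i : Fin r, i ≤ lst)
    (hleaf : ∀ i : Fin r, (i : ℕ) ≠ 0 → ∃ j, j < i ∧ ∀ k, k < i → F k ∩ F i ⊆ F j ∩ F i)
    (t : Fin q → Fin r) (htinj : Function.Injective t) (htne : ∀ i, t i ≠ lst)
    (hbr : ∀ k : Fin r, k ≠ lst → ((∃ i, t i = k) ↔ (F k ∩ F lst).Nonempty))
    (A : Finset (Fin n)) (hcard : A.card = α)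
    (hA1 : ∀ i, F (t i) ∩ F lst = A)
    (hA2 : ∀ i j, i ≠ j → F (t i) ∩ F (t j) = A)
    (G' : SimpleGraph (Fin n))
    (hG' : G' = G ⊔ cliqueOn (F lst ∪ Finset.univ.biUnion fun i => F (t i))) :
    gbei K m G = gbei K m G' ⊓ (varsIdeal K m A + gbei K m (delVerts G A)) :=
  gbei_eq_inf_decomposition_general K m n r q hq G F hmc lst t A hA1 G' hG'

end GBEI
end
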